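/- Let f : A ⥤ B be a functor, g : X ⥤ A a functor which is bijective on objects, and h : X ⥤ B a discrete opfibration such that g ⋙ f = h. For an object a of A and a morphism u : f.obj a ⟶ b of B, define φ(a,u) := g.map of the unique h-lift of u at (g.obj)⁻¹(a), and p(a,u) := g.obj of the codomain of that lift. Then (f, φ) is a delta lens A ⇄ B. -/

import Mathlib

/-!
Uniqueness of `h`-lifts does all the work: the `h`-lift of an identity is an identity, and the
`h`-lift of `u ≫ v` is the `h`-lift of `u` followed by the `h`-lift of `v` at its codomain, since
both sides lift the same morphism. Applying `g` turns these equalities into the delta lens laws,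
and `f` sends `φ(a, u)` to `u` because `g ⋙ f = h`.
-/

open CategoryTheory

/-- A functor is a discrete opfibration if every morphism out of the image of an object
has a unique lift. -/
def IsDiscreteOpfibration {X B : Type*} [Category X] [Category B] (h : X ⥤ B) : Prop :=
  ∀ (x : X) (b : B) (u : h.obj x ⟶ b),
    ∃! w : Σ x' : X, (x ⟶ x'), ∃ e : h.obj w.1 = b, h.map w.2 ≫ eqToHom e = u

/-- A delta lens `(f, φ) : A ⇄ B`. -/
structure DeltaLens (A B : Type*) [Category A] [Category B] where
  f : A ⥤ B
  p : ∀ (a : A) (b : B), (f.obj a ⟶ b) → A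
  lift : ∀ (a : A) (b : B) (u : f.obj a ⟶ b), a ⟶ p a b u
  f_p : ∀ (a : A) (b : B) (u : f.obj a ⟶ b), f.obj (p a b u) = b
  f_lift : ∀ (a : A) (b : B) (u : f.obj a ⟶ b), f.map (lift a b u) ≫ eqToHom (f_p a b u) = u
  p_id : ∀ a : A, p a (f.obj a) (𝟙 (f.obj a)) = a
  lift_id : ∀ a : A, lift a (f.obj a) (𝟙 (f.obj a)) ≫ eqToHom (p_id a) = 𝟙 a
  p_comp : ∀ (a : A) (b b' : B) (u : f.obj a ⟶ b) (v : b ⟶ b'),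
    p a b' (u ≫ v) = p (p a b u) b' (eqToHom (f_p a b u) ≫ v)
  lift_comp : ∀ (a : A) (b b' : B) (u : f.obj a ⟶ b) (v : b ⟶ b'),
    lift a b' (u ≫ v) ≫ eqToHom (p_comp a b b' u v) =
      lift a b u ≫ lift (p a b u) b' (eqToHom (f_p a b u) ≫ v)

variable {X A B : Type*} [Category X] [Category A] [Category B]

/-- The inverse of the object bijection of `g`. -/
noncomputable def gInv (g : X ⥤ A) (hg : Function.Bijective g.obj) : A → X :=
  (Equiv.ofBijective g.obj hg).symm

theorem gInv_spec (g : X ⥤ A) (hg : Function.Bijective g.obj) (a : A) :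
    g.obj (gInv g hg a) = a :=
  (Equiv.ofBijective g.obj hg).apply_symm_apply a

theorem hObj_gInv (f : A ⥤ B) (g : X ⥤ A) (h : X ⥤ B)
    (hg : Function.Bijective g.obj) (hcomp : g ⋙ f = h) (a : A) :
    h.obj (gInv g hg a) = f.obj a := by
  rw [← hcomp]
  exact congrArg f.obj (gInv_spec g hg a)

/-- The unique `h`-lift of `u` (transported to start at `h.obj ((g.obj)⁻¹ a)`)
at `(g.obj)⁻¹ a`. -/
noncomputable def spanChosen (f : A ⥤ B) (g : X ⥤ A) (h : X ⥤ B)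
    (hg : Function.Bijective g.obj) (hh : IsDiscreteOpfibration h) (hcomp : g ⋙ f = h)
    (a : A) (b : B) (u : f.obj a ⟶ b) : Σ x' : X, (gInv g hg a ⟶ x') :=
  Classical.choose (hh (gInv g hg a) b (eqToHom (hObj_gInv f g h hg hcomp a) ≫ u))

/-- The codomain assignment `p(a, u)` of the induced delta lens. -/
noncomputable def spanP (f : A ⥤ B) (g : X ⥤ A) (h : X ⥤ B)
    (hg : Function.Bijective g.obj) (hh : IsDiscreteOpfibration h) (hcomp : g ⋙ f = h)
    (a : A) (b : B) (u : f.obj a ⟶ b) : A :=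
  g.obj (spanChosen f g h hg hh hcomp a b u).1

/-- The lift assignment `φ(a, u)` of the induced delta lens. -/
noncomputable def spanLift (f : A ⥤ B) (g : X ⥤ A) (h : X ⥤ B)
    (hg : Function.Bijective g.obj) (hh : IsDiscreteOpfibration h) (hcomp : g ⋙ f = h)
    (a : A) (b : B) (u : f.obj a ⟶ b) : a ⟶ spanP f g h hg hh hcomp a b u :=
  eqToHom (gInv_spec g hg a).symm ≫ g.map (spanChosen f g h hg hh hcomp a b u).2

/-- The codomains `s.1` and `t.1` agree only propositionally, so the statement is made between
morphisms with the same endpoints `d ⟶ d'`. -/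
theorem CategoryTheory.Functor.map_snd_congr {C D : Type*} [Category C] [Category D]
    (F : C ⥤ D) {x : C} {d d' : D} {s t : Σ y : C, (x ⟶ y)} (hst : s = t)
    (e : d = F.obj x) (es : F.obj s.1 = d') (et : F.obj t.1 = d') :
    (eqToHom e ≫ F.map s.2) ≫ eqToHom es = (eqToHom e ≫ F.map t.2) ≫ eqToHom et := by
  subst hst
  rfl

section Span

variable (f : A ⥤ B) (g : X ⥤ A) (h : X ⥤ B)
    (hg : Function.Bijective g.obj) (hh : IsDiscreteOpfibration h) (hcomp : g ⋙ f = h)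

theorem spanChosen_spec (a : A) (b : B) (u : f.obj a ⟶ b) :
    ∃ e : h.obj (spanChosen f g h hg hh hcomp a b u).1 = b,
      h.map (spanChosen f g h hg hh hcomp a b u).2 ≫ eqToHom e =
        eqToHom (hObj_gInv f g h hg hcomp a) ≫ u :=
  (Classical.choose_spec (hh _ b _)).1

theorem spanChosen_eq_of_lifts (a : A) (b : B) (u : f.obj a ⟶ b)
    (w : Σ x' : X, (gInv g hg a ⟶ x'))
    (hw : ∃ e : h.obj w.1 = b, h.map w.2 ≫ eqToHom e = eqToHom (hObj_gInv f g h hg hcomp a) ≫ u) :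
    spanChosen f g h hg hh hcomp a b u = w :=
  ((Classical.choose_spec (hh _ b _)).2 w hw).symm

theorem gInv_spanP (a : A) (b : B) (u : f.obj a ⟶ b) :
    gInv g hg (spanP f g h hg hh hcomp a b u) = (spanChosen f g h hg hh hcomp a b u).1 :=
  (Equiv.ofBijective g.obj hg).symm_apply_apply _

theorem f_obj_spanP (a : A) (b : B) (u : f.obj a ⟶ b) :
    f.obj (spanP f g h hg hh hcomp a b u) = b := by
  subst hcomp
  exact (spanChosen_spec f g _ hg hh rfl a b u).choose

theorem f_map_spanLift (a : A) (b : B) (u : f.obj a ⟶ b) :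
    f.map (spanLift f g h hg hh hcomp a b u) ≫ eqToHom (f_obj_spanP f g h hg hh hcomp a b u) = u := by
  subst hcomp
  obtain ⟨e, he⟩ := spanChosen_spec f g _ hg hh rfl a b u
  simp only [Functor.comp_map] at he
  dsimp only [spanLift, spanP]
  rw [Functor.map_comp, eqToHom_map, Category.assoc, he, eqToHom_trans_assoc,
    eqToHom_refl, Category.id_comp]

theorem spanChosen_id (a : A) :
    spanChosen f g h hg hh hcomp a (f.obj a) (𝟙 (f.obj a)) = ⟨gInv g hg a, 𝟙 _⟩ :=
  spanChosen_eq_of_lifts f g h hg hh hcomp a _ _ _ ⟨hObj_gInv f g h hg hcomp a, by simp⟩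

theorem spanP_id (a : A) : spanP f g h hg hh hcomp a (f.obj a) (𝟙 (f.obj a)) = a := by
  rw [spanP, spanChosen_id]
  exact gInv_spec g hg a

theorem spanLift_id (a : A) :
    spanLift f g h hg hh hcomp a (f.obj a) (𝟙 (f.obj a)) ≫ eqToHom (spanP_id f g h hg hh hcomp a) =
      𝟙 a := by
  refine (g.map_snd_congr (spanChosen_id f g h hg hh hcomp a) _ _ (gInv_spec g hg a)).trans ?_
  simp

theorem spanChosen_comp (a : A) (b b' : B) (u : f.obj a ⟶ b) (v : b ⟶ b') :
    spanChosen f g h hg hh hcomp a b' (u ≫ v) =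
      ⟨(spanChosen f g h hg hh hcomp (spanP f g h hg hh hcomp a b u) b'
          (eqToHom (f_obj_spanP f g h hg hh hcomp a b u) ≫ v)).1,
        (spanChosen f g h hg hh hcomp a b u).2 ≫
          eqToHom (gInv_spanP f g h hg hh hcomp a b u).symm ≫
          (spanChosen f g h hg hh hcomp (spanP f g h hg hh hcomp a b u) b'
            (eqToHom (f_obj_spanP f g h hg hh hcomp a b u) ≫ v)).2⟩ := by
  subst hcomp
  obtain ⟨e₁, he₁⟩ := spanChosen_spec f g _ hg hh rfl a b u
  obtain ⟨e₂, he₂⟩ := spanChosen_spec f g _ hg hh rfl (spanP f g _ hg hh rfl a b u) b'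
    (eqToHom (f_obj_spanP f g _ hg hh rfl a b u) ≫ v)
  refine spanChosen_eq_of_lifts f g _ hg hh rfl a b' _ _ ⟨e₂, ?_⟩
  simp only [Functor.map_comp, eqToHom_map, Category.assoc, he₂]
  rw [← reassoc_of% he₁]
  simp

theorem spanP_comp (a : A) (b b' : B) (u : f.obj a ⟶ b) (v : b ⟶ b') :
    spanP f g h hg hh hcomp a b' (u ≫ v) =
      spanP f g h hg hh hcomp (spanP f g h hg hh hcomp a b u) b'
        (eqToHom (f_obj_spanP f g h hg hh hcomp a b u) ≫ v) :=
  congrArg (fun c : Σ _ : X, _ => g.obj c.1) (spanChosen_comp f g h hg hh hcomp a b b' u v)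

theorem spanLift_comp (a : A) (b b' : B) (u : f.obj a ⟶ b) (v : b ⟶ b') :
    spanLift f g h hg hh hcomp a b' (u ≫ v) ≫ eqToHom (spanP_comp f g h hg hh hcomp a b b' u v) =
      spanLift f g h hg hh hcomp a b u ≫
        spanLift f g h hg hh hcomp (spanP f g h hg hh hcomp a b u) b'
          (eqToHom (f_obj_spanP f g h hg hh hcomp a b u) ≫ v) := by
  refine (g.map_snd_congr (spanChosen_comp f g h hg hh hcomp a b b' u v) _ _ rfl).trans
    ((Category.assoc _ _ _).trans ?_ |>.trans (Category.assoc _ _ _).symm)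
  simp only [Functor.map_comp, eqToHom_map, eqToHom_refl, Category.comp_id]
  rfl

end Span

/-- Given `f : A ⥤ B`, a functor `g : X ⥤ A` which is bijective on objects and a
discrete opfibration `h : X ⥤ B` with `g ⋙ f = h`, the data `(f, φ)` defined from the
unique `h`-lifts is a delta lens `A ⇄ B`. -/
theorem span_deltaLens (f : A ⥤ B) (g : X ⥤ A) (h : X ⥤ B)
    (hg : Function.Bijective g.obj) (hh : IsDiscreteOpfibration h) (hcomp : g ⋙ f = h) :
    ∃ L : DeltaLens A B,
      L.f = f ∧
      HEq L.p (spanP f g h hg hh hcomp) ∧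
      HEq L.lift (spanLift f g h hg hh hcomp) :=
  ⟨{ f := f
     p := spanP f g h hg hh hcomp
     lift := spanLift f g h hg hh hcomp
     f_p := f_obj_spanP f g h hg hh hcomp
     f_lift := f_map_spanLift f g h hg hh hcomp
     p_id := spanP_id f g h hg hh hcomp
     lift_id := spanLift_id f g h hg hh hcomp
     p_comp := spanP_comp f g h hg hh hcomp
     lift_comp := spanLift_comp f g h hg hh hcomp }, rfl, HEq.rfl, HEq.rfl⟩
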